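/- arXiv:1906.05464 — 5 statements merged into one kernel-verified Lean document; each statement's English description precedes it below -/
import Mathlib

section
/- Let n ≥ 1, λ : Fin n → ℝ with λ_j > 0 and ∑_j λ_j = 1, and R = diag(λ) ∈ M_n(ℂ). Identify ℂⁿ⊗ℂⁿ with ℂ^{Fin n × Fin n} and a⊗b with the Kronecker product. Let J̃ be the conjugate-linear map on ℂ^{Fin n × Fin n} given by (J̃w)_{(i,j)} = conj(w_{(j,i)}). Let ρ be a positive semidefinite Hermitian matrix on ℂ^{Fin n × Fin n} with trace 1 such that (i) Tr(ρ·(a⊗1)) = Tr(R·a) for every a ∈ M_n(ℂ), and (ii) J̃∘ρ∘J̃ = ρ. Fix a unitary g ∈ M_n(ℂ), set p_k := g e_{kk} g* and P_k := 1⊗conj(p_k), and define E_g(σ) := ∑_{k} P_k σ P_k. Then for every b ∈ M_n(ℂ): Tr(E_g(ρ)·(1⊗b)) = Tr((∑_k conj(p_k)·R·conj(p_k))·b). (Paper's Lemma 1: the restriction of E_g(ρ) to the complementary subsystem B is implemented by E_g(Jπ_ω(R)J).) -/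
open scoped Matrix Kronecker ComplexOrder

/-!
The restriction of `ρ` to either tensor factor is implemented by the partial trace over the
other one. The `J̃`-invariance of `ρ` makes the left partial trace the entrywise conjugate of
the right one, which is `R` by hypothesis; since `R` is real, both restrictions are `Tr(R ·)`.
Conjugation by `P_k = 1 ⊗ conj(p_k)` maps `1 ⊗ b` to `1 ⊗ conj(p_k) b conj(p_k)`, so by
cyclicity of the trace each term of `E_g(ρ)` is a restriction of `ρ` itself to `B`.
-/

namespace Matrix

variable {m n α : Type*} [Fintype m] [Fintype n]

def partialTraceRight [AddCommMonoid α] (ρ : Matrix (m × n) (m × n) α) : Matrix m m α :=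
  of fun i p => ∑ j, ρ (i, j) (p, j)

def partialTraceLeft [AddCommMonoid α] (ρ : Matrix (m × n) (m × n) α) : Matrix n n α :=
  of fun j q => ∑ i, ρ (i, j) (i, q)

theorem trace_mul_kronecker_one [DecidableEq n] [CommSemiring α] (ρ : Matrix (m × n) (m × n) α)
    (a : Matrix m m α) :
    (ρ * (a ⊗ₖ (1 : Matrix n n α))).trace = (partialTraceRight ρ * a).trace := by
  simp only [trace, diag, mul_apply, kroneckerMap_apply, one_apply, partialTraceRight, of_apply,
    Fintype.sum_prod_type, mul_ite, mul_one, mul_zero, Finset.sum_mul, Finset.sum_ite_eq',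
    Finset.mem_univ, if_true]
  exact Finset.sum_congr rfl fun _ _ => Finset.sum_comm

theorem trace_mul_one_kronecker [DecidableEq m] [CommSemiring α] (ρ : Matrix (m × n) (m × n) α)
    (b : Matrix n n α) :
    (ρ * ((1 : Matrix m m α) ⊗ₖ b)).trace = (partialTraceLeft ρ * b).trace := by
  simp only [trace, diag, mul_apply, kroneckerMap_apply, one_apply, partialTraceLeft, of_apply,
    Fintype.sum_prod_type, ite_mul, mul_ite, one_mul, mul_zero, zero_mul, Finset.sum_mul,
    Finset.sum_ite_irrel, Finset.sum_const_zero, Finset.sum_ite_eq', Finset.mem_univ, if_true]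
  rw [Finset.sum_comm]
  exact Finset.sum_congr rfl fun _ _ => Finset.sum_comm

theorem partialTraceRight_eq_of_trace_mul_kronecker_one [DecidableEq n] [CommSemiring α]
    {ρ : Matrix (m × n) (m × n) α} {R : Matrix m m α}
    (h : ∀ a : Matrix m m α, (ρ * (a ⊗ₖ (1 : Matrix n n α))).trace = (R * a).trace) :
    partialTraceRight ρ = R :=
  ext_iff_trace_mul_right.mpr fun a => (trace_mul_kronecker_one ρ a).symm.trans (h a)

theorem partialTraceLeft_eq_map_star [AddCommMonoid α] [StarAddMonoid α]
    {ρ : Matrix (n × n) (n × n) α} (hJ : ∀ i j p q : n, ρ (i, j) (p, q) = star (ρ (j, i) (q, p))) :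
    partialTraceLeft ρ = (partialTraceRight ρ).map star := by
  ext j q
  simp only [partialTraceLeft, partialTraceRight, map_apply, of_apply, star_sum, hJ _ j _ q]

theorem trace_conj_one_kronecker_mul_one_kronecker [DecidableEq m] [CommSemiring α]
    (ρ : Matrix (m × n) (m × n) α) (q b : Matrix n n α) :
    (((1 : Matrix m m α) ⊗ₖ q) * ρ * (1 ⊗ₖ q) * (1 ⊗ₖ b)).trace
      = (partialTraceLeft ρ * (q * b * q)).trace := by
  rw [mul_assoc _ ρ, trace_mul_cycle, trace_mul_comm, ← mul_kronecker_mul, mul_assoc ρ,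
    ← mul_kronecker_mul, one_mul, one_mul, ← mul_assoc q, trace_mul_one_kronecker]

end Matrix

theorem restriction_of_gauge_operation_to_complementary_subsystem_general
    {n : ℕ} (lam : Fin n → ℝ)
    (R : Matrix (Fin n) (Fin n) ℂ) (hR : R = Matrix.diagonal fun j => (lam j : ℂ))
    (ρ : Matrix (Fin n × Fin n) (Fin n × Fin n) ℂ)
    (hrestrict : ∀ a : Matrix (Fin n) (Fin n) ℂ,
      (ρ * (a ⊗ₖ (1 : Matrix (Fin n) (Fin n) ℂ))).trace = (R * a).trace)
    (hJ : ∀ i j p q : Fin n, ρ (i, j) (p, q) = star (ρ (j, i) (q, p)))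
    (p : Fin n → Matrix (Fin n) (Fin n) ℂ)
    (P : Fin n → Matrix (Fin n × Fin n) (Fin n × Fin n) ℂ)
    (hP : ∀ k, P k = (1 : Matrix (Fin n) (Fin n) ℂ) ⊗ₖ ((p k).map star)) :
    ∀ b : Matrix (Fin n) (Fin n) ℂ,
      ((∑ k, P k * ρ * P k) * ((1 : Matrix (Fin n) (Fin n) ℂ) ⊗ₖ b)).trace
        = ((∑ k, (p k).map star * R * (p k).map star) * b).trace := by
  intro b
  have hR_real : R.map star = R := by
    rw [hR, Matrix.diagonal_map (star_zero ℂ)]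
    simp only [Complex.star_def, Complex.conj_ofReal]
  have hleft : ρ.partialTraceLeft = R := by
    rw [Matrix.partialTraceLeft_eq_map_star hJ,
      Matrix.partialTraceRight_eq_of_trace_mul_kronecker_one hrestrict, hR_real]
  simp only [Finset.sum_mul, Matrix.trace_sum, hP,
    Matrix.trace_conj_one_kronecker_mul_one_kronecker, hleft]
  exact Finset.sum_congr rfl fun k _ => by
    rw [← mul_assoc, Matrix.trace_mul_cycle, ← mul_assoc]

/-- **Paper's Lemma 1.** Let `R = diag(λ)` be a faithful density matrix,
and `ρ` a density matrix on `ℂⁿ⊗ℂⁿ ≅ ℂ^{Fin n × Fin n}` which restricts to `ω = Tr(R·)` on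
the subalgebra `{a⊗1}` and is invariant under the modular conjugation `J̃` (entrywise:
`ρ_{(i,j),(p,q)} = conj ρ_{(j,i),(q,p)}`).  For a unitary `g`, let `p_k = g e_{kk} g*` and
`P_k = 1 ⊗ conj(p_k)`, and `E_g(σ) = ∑_k P_k σ P_k`.  Then the restriction of `E_g(ρ)` to the
complementary subsystem `B = {1⊗b}` is implemented by `∑_k conj(p_k)·R·conj(p_k)`:
`Tr(E_g(ρ)·(1⊗b)) = Tr((∑_k conj(p_k) R conj(p_k))·b)` for every `b`. -/
theorem restriction_of_gauge_operation_to_complementary_subsystem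
    {n : ℕ} (lam : Fin n → ℝ) (hpos : ∀ j, 0 < lam j) (hsum : ∑ j, lam j = 1)
    (R : Matrix (Fin n) (Fin n) ℂ) (hR : R = Matrix.diagonal fun j => (lam j : ℂ))
    (ρ : Matrix (Fin n × Fin n) (Fin n × Fin n) ℂ)
    (hρ : ρ.PosSemidef) (hρtr : ρ.trace = 1)
    (hrestrict : ∀ a : Matrix (Fin n) (Fin n) ℂ,
      (ρ * (a ⊗ₖ (1 : Matrix (Fin n) (Fin n) ℂ))).trace = (R * a).trace)
    (hJ : ∀ i j p q : Fin n, ρ (i, j) (p, q) = star (ρ (j, i) (q, p)))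
    (g : Matrix (Fin n) (Fin n) ℂ) (hg : g ∈ Matrix.unitaryGroup (Fin n) ℂ)
    (p : Fin n → Matrix (Fin n) (Fin n) ℂ)
    (hp : ∀ k, p k = g * Matrix.single k k 1 * gᴴ)
    (P : Fin n → Matrix (Fin n × Fin n) (Fin n × Fin n) ℂ)
    (hP : ∀ k, P k = (1 : Matrix (Fin n) (Fin n) ℂ) ⊗ₖ ((p k).map star)) :
    ∀ b : Matrix (Fin n) (Fin n) ℂ,
      ((∑ k, P k * ρ * P k) * ((1 : Matrix (Fin n) (Fin n) ℂ) ⊗ₖ b)).trace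
        = ((∑ k, (p k).map star * R * (p k).map star) * b).trace :=
  restriction_of_gauge_operation_to_complementary_subsystem_general lam R hR ρ hrestrict hJ p P hP
end

section
/- Let n ≥ 1, λ : Fin n → ℝ with λ_j > 0, R = diag(λ) ∈ M_n(ℂ), J(x) := R^{1/2} x† R^{-1/2} the modular conjugation on the GNS space (M_n(ℂ), ⟨a,b⟩_ω = Tr(Ra†b)), and for a ∈ M_n(ℂ) let L_a denote left multiplication, L_a(x) = ax. Then for every a, the map J∘L_a∘J is right multiplication by R^{1/2} a† R^{-1/2}, i.e. (J∘L_a∘J)(x) = x·R^{1/2} a† R^{-1/2}; consequently J∘L_a∘J commutes with L_c for every c ∈ M_n(ℂ), and the set {J∘L_a∘J : a ∈ M_n(ℂ)} equals the commutant of {L_a : a ∈ M_n(ℂ)} inside the algebra of ℂ-linear endomorphisms of M_n(ℂ). (Finite-dimensional Tomita–Takesaki relation Jπ_ω(A)J = π_ω(A)'.) -/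
/-!
Writing `J x = s * star x * t` with `s = R^{1/2}`, `t = R^{-1/2}` self-adjoint and `s * t = 1`,
the identity `J (a * J x) = x * J a` is a one-line computation in any star monoid. Taking `a = 1`
shows that `J` is an involution, hence onto, so the maps `x ↦ J (a * J x)` are exactly the right
multiplications; and the maps commuting with all left multiplications are the right
multiplications by `T 1`.
-/

open scoped Matrix

section TwistedStar

variable {A : Type*} [Monoid A] [StarMul A] {s t : A}

def twistedStar (s t x : A) : A := s * star x * t

theorem twistedStar_mul_twistedStar (hs : IsSelfAdjoint s) (ht : IsSelfAdjoint t)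
    (hst : s * t = 1) (a x : A) :
    twistedStar s t (a * twistedStar s t x) = x * twistedStar s t a := by
  simp only [twistedStar, star_mul, star_star, hs.star_eq, ht.star_eq, mul_assoc]
  rw [← mul_assoc s t, hst, one_mul]

theorem twistedStar_involutive (hs : IsSelfAdjoint s) (ht : IsSelfAdjoint t) (hst : s * t = 1) :
    Function.Involutive (twistedStar s t) := fun x => by
  simpa [twistedStar, hst] using twistedStar_mul_twistedStar hs ht hst 1 x

end TwistedStar

theorem forall_map_mul_left_iff_exists_eq_mul_right {M : Type*} [Monoid M] (T : M → M) :
    (∀ c x, T (c * x) = c * T x) ↔ ∃ b, ∀ x, T x = x * b :=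
  ⟨fun h => ⟨T 1, fun x => by rw [← h, mul_one]⟩, fun ⟨b, hb⟩ c x => by rw [hb, hb, mul_assoc]⟩

namespace Matrix

variable {ι : Type*} [DecidableEq ι]

theorem isSelfAdjoint_diagonal_ofReal (d : ι → ℝ) :
    IsSelfAdjoint (diagonal fun i => (d i : ℂ)) :=
  (isHermitian_diagonal_iff.mpr fun i => Complex.conj_ofReal (d i)).isSelfAdjoint

theorem diagonal_mul_diagonal_inv [Fintype ι] {K : Type*} [DivisionRing K] {d : ι → K} (hd : ∀ i, d i ≠ 0) :
    diagonal d * diagonal (fun i => (d i)⁻¹) = 1 := by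
  rw [diagonal_mul_diagonal, ← diagonal_one]
  exact congrArg diagonal (funext fun i => mul_inv_cancel₀ (hd i))

end Matrix

theorem modular_conjugation_commutant_general
    {n : ℕ} (lam : Fin n → ℝ) (hpos : ∀ j, 0 < lam j)
    (Rhalf Rinvhalf : Matrix (Fin n) (Fin n) ℂ)
    (hRhalf : Rhalf = Matrix.diagonal fun j => (Real.sqrt (lam j) : ℂ))
    (hRinvhalf : Rinvhalf = Matrix.diagonal fun j => ((Real.sqrt (lam j))⁻¹ : ℂ))
    (J : Matrix (Fin n) (Fin n) ℂ → Matrix (Fin n) (Fin n) ℂ)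
    (hJ : ∀ x, J x = Rhalf * xᴴ * Rinvhalf) :
    (∀ (a x : Matrix (Fin n) (Fin n) ℂ), J (a * J x) = x * (Rhalf * aᴴ * Rinvhalf)) ∧
      (∀ (a c x : Matrix (Fin n) (Fin n) ℂ), J (a * J (c * x)) = c * J (a * J x)) ∧
      {T : Matrix (Fin n) (Fin n) ℂ →ₗ[ℂ] Matrix (Fin n) (Fin n) ℂ |
          ∀ c x, T (c * x) = c * T x}
        = {T : Matrix (Fin n) (Fin n) ℂ →ₗ[ℂ] Matrix (Fin n) (Fin n) ℂ |
            ∃ a, ∀ x, T x = J (a * J x)} := by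
  have hs : IsSelfAdjoint Rhalf := hRhalf ▸ Matrix.isSelfAdjoint_diagonal_ofReal _
  have ht : IsSelfAdjoint Rinvhalf := by
    simpa [hRinvhalf] using Matrix.isSelfAdjoint_diagonal_ofReal fun j => (Real.sqrt (lam j))⁻¹
  have hst : Rhalf * Rinvhalf = 1 := hRhalf ▸ hRinvhalf ▸ Matrix.diagonal_mul_diagonal_inv
    fun j => Complex.ofReal_ne_zero.mpr (Real.sqrt_pos.mpr (hpos j)).ne'
  obtain rfl : J = twistedStar Rhalf Rinvhalf := funext hJ
  have key := twistedStar_mul_twistedStar hs ht hst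
  refine ⟨key, fun a c x => by rw [key, key, mul_assoc], ?_⟩
  refine Set.ext fun T => ?_
  simp only [Set.mem_ofPred_eq, forall_map_mul_left_iff_exists_eq_mul_right, key]
  exact (twistedStar_involutive hs ht hst).surjective.exists

/-- **Tomita–Takesaki relation `Jπ_ω(A)J = π_ω(A)'` in finite dimensions.**
With `J(x) = R^{1/2} x† R^{-1/2}` the modular conjugation of the GNS space of
`ω(a) = Tr(Ra)`, `R = diag(λ)`, and `L_a` left multiplication: `J∘L_a∘J` is right
multiplication by `R^{1/2} a† R^{-1/2}`; hence it commutes with every `L_c`, and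
`{J∘L_a∘J : a ∈ M_n(ℂ)}` is exactly the commutant of `{L_a : a ∈ M_n(ℂ)}` in the ℂ-linear
endomorphisms of `M_n(ℂ)`. -/
theorem modular_conjugation_commutant
    {n : ℕ} (lam : Fin n → ℝ) (hpos : ∀ j, 0 < lam j)
    (R Rhalf Rinvhalf : Matrix (Fin n) (Fin n) ℂ)
    (hR : R = Matrix.diagonal fun j => (lam j : ℂ))
    (hRhalf : Rhalf = Matrix.diagonal fun j => (Real.sqrt (lam j) : ℂ))
    (hRinvhalf : Rinvhalf = Matrix.diagonal fun j => ((Real.sqrt (lam j))⁻¹ : ℂ))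
    (J : Matrix (Fin n) (Fin n) ℂ → Matrix (Fin n) (Fin n) ℂ)
    (hJ : ∀ x, J x = Rhalf * xᴴ * Rinvhalf) :
    (∀ (a x : Matrix (Fin n) (Fin n) ℂ), J (a * J x) = x * (Rhalf * aᴴ * Rinvhalf)) ∧
      (∀ (a c x : Matrix (Fin n) (Fin n) ℂ), J (a * J (c * x)) = c * J (a * J x)) ∧
      {T : Matrix (Fin n) (Fin n) ℂ →ₗ[ℂ] Matrix (Fin n) (Fin n) ℂ |
          ∀ c x, T (c * x) = c * T x}
        = {T : Matrix (Fin n) (Fin n) ℂ →ₗ[ℂ] Matrix (Fin n) (Fin n) ℂ |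
            ∃ a, ∀ x, T x = J (a * J x)} :=
  modular_conjugation_commutant_general lam hpos Rhalf Rinvhalf hRhalf hRinvhalf J hJ
end

section
/- Let n ≥ 1, λ : Fin n → ℝ with λ_j > 0, R = diag(λ) ∈ M_n(ℂ). For t ∈ ℝ let R^{it} := diag(exp(i t log λ_j)), and define Δ_t(x) := R^{it} x R^{-it} on M_n(ℂ). Then: (i) Δ_t is unitary with respect to the GNS inner product ⟨a,b⟩_ω = Tr(R a† b); (ii) for every a ∈ M_n(ℂ), Δ_t ∘ L_a ∘ Δ_{-t} = L_{R^{it} a R^{-it}}, where L_a(x) = ax; hence conjugation by the modular flow Δ^{it} maps the left-multiplication algebra {L_a : a ∈ M_n(ℂ)} onto itself. (Finite-dimensional form of the second Tomita–Takesaki relation Δ^{it} π_ω(A) Δ^{-it} = π_ω(A).) -/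
/-!
`R^{it}` is a diagonal unitary, `R^{-it}` is its adjoint, and `R^{it}` commutes with the
diagonal density `R`. Conjugation `x ↦ U x U*` by a unitary `U` is invertible with inverse
conjugation by `U*` and intertwines left multiplication by `a` with left multiplication by
`U a U*`; if moreover `U` commutes with `R`, cyclicity of the trace shows it preserves
`⟨a, b⟩ = Tr(R a* b)`.
-/

open scoped Matrix
open Matrix

namespace Unitary

variable {M : Type*} [Monoid M] [StarMul M] {U : M}

theorem conj_conj_star (hU : U ∈ unitary M) (x : M) : U * (star U * x * U) * star U = x := by
  simp only [← mul_assoc, mul_star_self_of_mem hU, one_mul]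
  simp only [mul_assoc, mul_star_self_of_mem hU, mul_one]

theorem conj_mul_conj_star (hU : U ∈ unitary M) (a x : M) :
    U * (a * (star U * x * U)) * star U = U * a * star U * x := by
  simp [mul_assoc, hU]

end Unitary

namespace Matrix

variable {ι α : Type*} [DecidableEq ι]

theorem trace_mul_conjTranspose_mul_of_unitary_conj [Fintype ι] [CommRing α] [StarRing α]
    {R U : Matrix ι ι α} (hU : U ∈ unitaryGroup ι α) (hRU : Commute R U) (a b : Matrix ι ι α) :
    (R * (U * a * star U)ᴴ * (U * b * star U)).trace = (R * aᴴ * b).trace := by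
  have hU' : Uᴴ * U = 1 := by rw [← star_eq_conjTranspose, Unitary.star_mul_self_of_mem hU]
  simp only [star_eq_conjTranspose]
  calc (R * (U * a * Uᴴ)ᴴ * (U * b * Uᴴ)).trace
      = (R * U * (aᴴ * b) * Uᴴ).trace := by
        simp only [conjTranspose_mul, conjTranspose_conjTranspose, mul_assoc]
        rw [← mul_assoc Uᴴ U, hU', one_mul]
    _ = (Uᴴ * U * R * (aᴴ * b)).trace := by
        rw [trace_mul_comm, hRU.eq]
        simp only [mul_assoc]
    _ = (R * aᴴ * b).trace := by rw [hU', one_mul, mul_assoc]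

/-- The one-parameter group `t ↦ exp(i t H)` of the Hermitian matrix `H = diagonal θ`. -/
noncomputable def diagonalPhase (θ : ι → ℝ) (t : ℝ) : Matrix ι ι ℂ :=
  diagonal fun j => Complex.exp (Complex.I * t * θ j)

theorem star_diagonalPhase (θ : ι → ℝ) (t : ℝ) :
    star (diagonalPhase θ t) = diagonalPhase θ (-t) := by
  rw [star_eq_conjTranspose, diagonalPhase, diagonal_conjTranspose, diagonalPhase]
  congr 1
  funext j
  simp only [Pi.star_apply, RCLike.star_def, ← Complex.exp_conj, map_mul, Complex.conj_I,
    Complex.conj_ofReal]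
  push_cast
  ring_nf

theorem diagonalPhase_mem_unitaryGroup [Fintype ι] (θ : ι → ℝ) (t : ℝ) :
    diagonalPhase θ t ∈ unitaryGroup ι ℂ := by
  rw [mem_unitaryGroup_iff, star_diagonalPhase, diagonalPhase, diagonalPhase,
    diagonal_mul_diagonal, ← diagonal_one]
  congr 1
  funext j
  rw [← Complex.exp_add, ← Complex.exp_zero]
  push_cast
  ring_nf

end Matrix

theorem modular_flow_preserves_observables_general
    {n : ℕ} (lam : Fin n → ℝ)
    (R : Matrix (Fin n) (Fin n) ℂ) (hR : R = Matrix.diagonal fun j => (lam j : ℂ))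
    (Rit : ℝ → Matrix (Fin n) (Fin n) ℂ)
    (hRit : ∀ t, Rit t = Matrix.diagonal fun j =>
      Complex.exp (Complex.I * (t : ℂ) * (Real.log (lam j) : ℂ)))
    (gnsInner : Matrix (Fin n) (Fin n) ℂ → Matrix (Fin n) (Fin n) ℂ → ℂ)
    (hgns : ∀ a b, gnsInner a b = (R * aᴴ * b).trace)
    (Δt : ℝ → Matrix (Fin n) (Fin n) ℂ → Matrix (Fin n) (Fin n) ℂ)
    (hΔt : ∀ t x, Δt t x = Rit t * x * Rit (-t)) :
    (∀ (t : ℝ) (a b : Matrix (Fin n) (Fin n) ℂ),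
        gnsInner (Δt t a) (Δt t b) = gnsInner a b) ∧
      (∀ (t : ℝ) (x : Matrix (Fin n) (Fin n) ℂ), Δt t (Δt (-t) x) = x) ∧
      (∀ (t : ℝ) (a x : Matrix (Fin n) (Fin n) ℂ),
        Δt t (a * Δt (-t) x) = (Rit t * a * Rit (-t)) * x) := by
  have hRit_eq (t : ℝ) : Rit t = diagonalPhase (fun j => Real.log (lam j)) t := hRit t
  have hunitary (t : ℝ) : Rit t ∈ unitaryGroup (Fin n) ℂ := by
    rw [hRit_eq]; exact diagonalPhase_mem_unitaryGroup _ t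
  have hstar (t : ℝ) : Rit (-t) = star (Rit t) := by rw [hRit_eq, hRit_eq, star_diagonalPhase]
  have hΔ (t : ℝ) (x : Matrix (Fin n) (Fin n) ℂ) : Δt t x = Rit t * x * star (Rit t) := by
    rw [hΔt, hstar]
  have hneg (t : ℝ) (x : Matrix (Fin n) (Fin n) ℂ) : Δt (-t) x = star (Rit t) * x * Rit t := by
    rw [hΔt, neg_neg, hstar]
  refine ⟨fun t a b => ?_, fun t x => ?_, fun t a x => ?_⟩
  · have hcomm : Commute R (Rit t) := by rw [hR, hRit]; exact commute_diagonal _ _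
    rw [hgns, hgns, hΔ, hΔ]
    exact trace_mul_conjTranspose_mul_of_unitary_conj (hunitary t) hcomm a b
  · rw [hneg, hΔ]
    exact Unitary.conj_conj_star (hunitary t) x
  · rw [hneg, hΔ, hstar]
    exact Unitary.conj_mul_conj_star (hunitary t) a x

/-- **Tomita–Takesaki relation `Δ^{it} π_ω(A) Δ^{-it} = π_ω(A)` in finite
dimensions.** With `R = diag(λ)`, `R^{it} = diag(exp(i t log λ_j))` and the modular flow
`Δ_t(x) = R^{it} x R^{-it}` on the GNS space `(M_n(ℂ), ⟨a,b⟩_ω = Tr(R a† b))`: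
(i) each `Δ_t` is unitary for the GNS inner product (isometric and invertible, with inverse
`Δ_{-t}`); (ii) `Δ_t ∘ L_a ∘ Δ_{-t} = L_{R^{it} a R^{-it}}`, so conjugation by the modular flow
maps the left-multiplication algebra onto itself. -/
theorem modular_flow_preserves_observables
    {n : ℕ} (lam : Fin n → ℝ) (hpos : ∀ j, 0 < lam j)
    (R : Matrix (Fin n) (Fin n) ℂ) (hR : R = Matrix.diagonal fun j => (lam j : ℂ))
    (Rit : ℝ → Matrix (Fin n) (Fin n) ℂ)
    (hRit : ∀ t, Rit t = Matrix.diagonal fun j =>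
      Complex.exp (Complex.I * (t : ℂ) * (Real.log (lam j) : ℂ)))
    (gnsInner : Matrix (Fin n) (Fin n) ℂ → Matrix (Fin n) (Fin n) ℂ → ℂ)
    (hgns : ∀ a b, gnsInner a b = (R * aᴴ * b).trace)
    (Δt : ℝ → Matrix (Fin n) (Fin n) ℂ → Matrix (Fin n) (Fin n) ℂ)
    (hΔt : ∀ t x, Δt t x = Rit t * x * Rit (-t)) :
    (∀ (t : ℝ) (a b : Matrix (Fin n) (Fin n) ℂ),
        gnsInner (Δt t a) (Δt t b) = gnsInner a b) ∧
      (∀ (t : ℝ) (x : Matrix (Fin n) (Fin n) ℂ), Δt t (Δt (-t) x) = x) ∧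
      (∀ (t : ℝ) (a x : Matrix (Fin n) (Fin n) ℂ),
        Δt t (a * Δt (-t) x) = (Rit t * a * Rit (-t)) * x) :=
  modular_flow_preserves_observables_general lam R hR Rit hRit gnsInner hgns Δt hΔt
end

section
/- Let n ≥ 1, λ : Fin n → ℝ with λ_j > 0 and ∑_j λ_j = 1, R = diag(λ), and Ω ∈ ℂ^{Fin n × Fin n} the unit vector Ω_{(i,j)} = δ_{ij} λ_i^{1/2}. Fix a unitary g ∈ M_n(ℂ), set λ_k(g) := ∑_i λ_i |g_{ik}|², P_k := 1⊗conj(g e_{kk} g*), and ρ_g := ∑_k P_k Q_Ω P_k where Q_Ω is the orthogonal projection onto span(Ω). Then: (i) for every a ∈ M_n(ℂ), Tr(ρ_g·(a⊗1)) = Tr(R·a) (the restriction of ρ_g to subsystem A is ω, independently of g); (ii) for every b ∈ M_n(ℂ), Tr(ρ_g·(1⊗b)) = Tr((∑_k λ_k(g)·conj(g) e_{kk} conj(g)†)·b) (the restriction of ρ_g to subsystem B is ∑_k λ_k(g) ḡ|k⟩⟨k|ḡ*). -/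
open scoped Matrix Kronecker

/-!
Write `S = diag(√λ)`, so that `Ω = vec S`, and `B_k = ḡ e_kk ḡ*`, so that `P_k = 1 ⊗ B_k` with
`B_k` Hermitian. Since `(1 ⊗ B) vec S = vec (B S)`, `P_k Q_Ω P_k = |vec (B_k S)⟩⟨vec (B_k S)|`, and
`Tr(|vec M⟩⟨vec M| (a ⊗ b)) = Tr(M* b M aᵀ)`. Summing over `k`: for `b = 1` the `B_k` form a
resolution of the identity, leaving `Tr(S* S aᵀ) = Tr(R a)`; for `a = 1` one is left with
`∑_k B_k R B_k`, and `B_k R B_k = ⟨ḡ e_k, R ḡ e_k⟩ B_k = λ_k(g) B_k`.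
-/

namespace Matrix

variable {m n α : Type*}

theorem vec_diagonal [Zero α] [DecidableEq n] (d : n → α) :
    vec (diagonal d) = fun p => if p.1 = p.2 then d p.1 else 0 := by
  ext ⟨i, j⟩
  by_cases hij : i = j
  · simp [hij]
  · simp [hij, Ne.symm hij]

variable [Fintype m] [Fintype n] [CommSemiring α]

theorem trace_vecMulVec_mul (x y : n → α) (X : Matrix n n α) :
    trace (vecMulVec x y * X) = y ⬝ᵥ X *ᵥ x := by
  rw [vecMulVec_mul, trace_vecMulVec, dotProduct_comm, dotProduct_mulVec]

theorem trace_diagonal_mul_transpose [DecidableEq n] (d : n → α) (a : Matrix n n α) :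
    trace (diagonal d * aᵀ) = trace (diagonal d * a) := by
  rw [← trace_transpose, transpose_mul, transpose_transpose, diagonal_transpose, trace_mul_comm]

variable [StarRing α]

theorem mul_vecMulVec_star_mul_of_isHermitian {P : Matrix n n α} (hP : P.IsHermitian)
    (x : n → α) : P * vecMulVec x (star x) * P = vecMulVec (P *ᵥ x) (star (P *ᵥ x)) := by
  rw [mul_vecMulVec, vecMulVec_mul, star_mulVec, hP.eq]

theorem trace_vecMulVec_vec_mul_kronecker (M : Matrix m n α) (a : Matrix n n α)
    (b : Matrix m m α) :
    trace (vecMulVec (vec M) (star (vec M)) * (a ⊗ₖ b)) = trace (Mᴴ * b * M * aᵀ) := by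
  rw [trace_vecMulVec_mul, kronecker_mulVec_vec, star_vec_dotProduct_vec, Matrix.mul_assoc,
    Matrix.mul_assoc, Matrix.mul_assoc]

section Measurement

variable {ι : Type*} [Fintype ι] [DecidableEq n] {B : ι → Matrix m m α}
  (hB : ∀ k, (B k).IsHermitian) (S : Matrix m n α)
include hB

theorem trace_sum_one_kronecker_mul_vecMulVec_mul_kronecker (a : Matrix n n α)
    (b : Matrix m m α) :
    trace ((∑ k, (1 ⊗ₖ B k) * vecMulVec (vec S) (star (vec S)) * (1 ⊗ₖ B k)) * (a ⊗ₖ b)) =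
      ∑ k, trace ((B k * S)ᴴ * b * (B k * S) * aᵀ) := by
  have hP : ∀ k, (1 ⊗ₖ B k : Matrix (n × m) (n × m) α).IsHermitian := fun k => by
    rw [IsHermitian, conjTranspose_kronecker, conjTranspose_one, (hB k).eq]
  simp only [Finset.sum_mul, trace_sum, mul_vecMulVec_star_mul_of_isHermitian (hP _),
    ← vec_mul_eq_mulVec, trace_vecMulVec_vec_mul_kronecker]

theorem trace_sum_one_kronecker_mul_vecMulVec_mul_kronecker_one [DecidableEq m]
    (hB1 : ∑ k, B k * B k = 1) (a : Matrix n n α) :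
    trace ((∑ k, (1 ⊗ₖ B k) * vecMulVec (vec S) (star (vec S)) * (1 ⊗ₖ B k)) * (a ⊗ₖ 1)) =
      trace (Sᴴ * S * aᵀ) := by
  rw [trace_sum_one_kronecker_mul_vecMulVec_mul_kronecker hB, ← trace_sum]
  congr 1
  calc ∑ k, (B k * S)ᴴ * (1 : Matrix m m α) * (B k * S) * aᵀ
      = Sᴴ * (∑ k, B k * B k) * S * aᵀ := by
        simp only [conjTranspose_mul, (hB _).eq, Matrix.mul_one, Matrix.mul_sum, Matrix.sum_mul,
          Matrix.mul_assoc]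
    _ = Sᴴ * S * aᵀ := by rw [hB1, Matrix.mul_one]

theorem trace_sum_one_kronecker_mul_vecMulVec_mul_one_kronecker (b : Matrix m m α) :
    trace ((∑ k, (1 ⊗ₖ B k) * vecMulVec (vec S) (star (vec S)) * (1 ⊗ₖ B k)) * (1 ⊗ₖ b)) =
      trace ((∑ k, B k * (S * Sᴴ) * B k) * b) := by
  rw [trace_sum_one_kronecker_mul_vecMulVec_mul_kronecker hB, Finset.sum_mul, trace_sum]
  refine Finset.sum_congr rfl fun k _ => ?_
  rw [transpose_one, Matrix.mul_one, trace_mul_cycle, conjTranspose_mul, (hB k).eq]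
  simp only [Matrix.mul_assoc]

end Measurement

section Unitary

variable [DecidableEq n]

theorem isHermitian_mul_single_mul_conjTranspose (U : Matrix n n α) (k : n) :
    (U * single k k 1 * Uᴴ).IsHermitian := by
  simp [IsHermitian, conjTranspose_mul, Matrix.mul_assoc]

theorem map_star_mul_single_mul_conjTranspose (U : Matrix n n α) (k : n) :
    (U * single k k 1 * Uᴴ).map star = U.map star * single k k 1 * (U.map star)ᴴ := by
  change (U * single k k 1 * Uᴴ).map (starRingEnd α) = _
  rw [Matrix.map_mul, Matrix.map_mul, map_single, map_one]
  rfl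

theorem conjTranspose_mul_diagonal_mul_apply_self (U : Matrix n n α) (d : n → α) (k : n) :
    (Uᴴ * diagonal d * U) k k = ∑ i, d i * (star (U i k) * U i k) := by
  rw [mul_apply]
  simp only [mul_diagonal, conjTranspose_apply]
  exact Finset.sum_congr rfl fun i _ => by ring

theorem mul_single_mul_conjTranspose_mul_mul_self (U A : Matrix n n α) (k : n) :
    U * single k k 1 * Uᴴ * A * (U * single k k 1 * Uᴴ) =
      (Uᴴ * A * U) k k • (U * single k k 1 * Uᴴ) := by
  have hsingle :
      single k k 1 * (Uᴴ * A * U) * single k k 1 = (Uᴴ * A * U) k k • single k k 1 := by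
    rw [single_mul_mul_single, smul_single, mul_one, one_mul, smul_eq_mul, mul_one]
  calc _ = U * (single k k 1 * (Uᴴ * A * U) * single k k 1) * Uᴴ := by
        simp only [Matrix.mul_assoc]
    _ = _ := by rw [hsingle, Matrix.mul_smul, Matrix.smul_mul]

theorem sum_mul_single_mul_conjTranspose_mul_self {U : Matrix n n α}
    (hU : U ∈ unitary (Matrix n n α)) :
    ∑ k, U * single k k 1 * Uᴴ * (U * single k k 1 * Uᴴ) = 1 := by
  have hUU : Uᴴ * 1 * U = 1 := by
    rw [Matrix.mul_one, ← star_eq_conjTranspose, Unitary.star_mul_self_of_mem hU]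
  calc ∑ k, U * single k k 1 * Uᴴ * (U * single k k 1 * Uᴴ)
      = ∑ k, U * single k k 1 * Uᴴ * 1 * (U * single k k 1 * Uᴴ) := by
        simp only [Matrix.mul_one]
    _ = U * (∑ k, single k k 1) * Uᴴ := by
        simp only [mul_single_mul_conjTranspose_mul_mul_self, hUU, one_apply_eq, one_smul,
          Finset.mul_sum, Finset.sum_mul]
    _ = 1 := by
        rw [sum_single_one, Matrix.mul_one, ← star_eq_conjTranspose,
          Unitary.mul_star_self_of_mem hU]

end Unitary

end Matrix

open Matrix in
theorem gauge_measured_state_restrictions_general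
    {n : ℕ} (lam : Fin n → ℝ) (hpos : ∀ j, 0 < lam j)
    (R : Matrix (Fin n) (Fin n) ℂ) (hR : R = Matrix.diagonal fun j => (lam j : ℂ))
    (Ω : Fin n × Fin n → ℂ)
    (hΩ : ∀ p : Fin n × Fin n, Ω p = if p.1 = p.2 then (Real.sqrt (lam p.1) : ℂ) else 0)
    (g : Matrix (Fin n) (Fin n) ℂ) (hg : g ∈ Matrix.unitaryGroup (Fin n) ℂ)
    (lamg : Fin n → ℝ) (hlamg : ∀ k, lamg k = ∑ i, lam i * ‖g i k‖ ^ 2)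
    (P : Fin n → Matrix (Fin n × Fin n) (Fin n × Fin n) ℂ)
    (hP : ∀ k, P k = (1 : Matrix (Fin n) (Fin n) ℂ) ⊗ₖ
      ((g * Matrix.single k k (1 : ℂ) * gᴴ).map star))
    (Q : Matrix (Fin n × Fin n) (Fin n × Fin n) ℂ)
    (hQ : ∀ p q : Fin n × Fin n, Q p q = Ω p * star (Ω q))
    (ρg : Matrix (Fin n × Fin n) (Fin n × Fin n) ℂ) (hρg : ρg = ∑ k, P k * Q * P k) :
    (∀ a : Matrix (Fin n) (Fin n) ℂ,
        (ρg * (a ⊗ₖ (1 : Matrix (Fin n) (Fin n) ℂ))).trace = (R * a).trace) ∧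
      (∀ b : Matrix (Fin n) (Fin n) ℂ,
        (ρg * ((1 : Matrix (Fin n) (Fin n) ℂ) ⊗ₖ b)).trace
          = ((∑ k, ((lamg k : ℝ) : ℂ) •
              (g.map star * Matrix.single k k (1 : ℂ) * (g.map star)ᴴ)) * b).trace) := by
  set h := g.map star with h_def
  set S : Matrix (Fin n) (Fin n) ℂ := diagonal fun i => (√(lam i) : ℂ)
  have hB := isHermitian_mul_single_mul_conjTranspose h
  have hρ : ρg = ∑ k, (1 ⊗ₖ (h * single k k 1 * hᴴ)) * vecMulVec (vec S) (star (vec S)) *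
      (1 ⊗ₖ (h * single k k 1 * hᴴ)) := by
    have hΩS : Ω = vec S := by rw [vec_diagonal]; exact funext hΩ
    rw [hρg, show Q = vecMulVec Ω (star Ω) from Matrix.ext hQ, hΩS]
    simp only [hP, map_star_mul_single_mul_conjTranspose, ← h_def]
  have hSS : S * Sᴴ = R ∧ Sᴴ * S = R := by
    have hsqrt : ∀ i, ((√(lam i) : ℝ) : ℂ) * ((√(lam i) : ℝ) : ℂ) = lam i := fun i => by
      rw [← Complex.ofReal_mul, Real.mul_self_sqrt (hpos i).le]
    simp [S, hR, diagonal_conjTranspose, hsqrt]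
  have hweight : ∀ k, (hᴴ * R * h) k k = lamg k := fun k => by
    rw [hR, conjTranspose_mul_diagonal_mul_apply_self, hlamg]
    push_cast
    refine Finset.sum_congr rfl fun i _ => ?_
    rw [h_def, map_apply, star_star, Complex.star_def, Complex.mul_conj']
  refine ⟨fun a => ?_, fun b => ?_⟩
  · rw [hρ, trace_sum_one_kronecker_mul_vecMulVec_mul_kronecker_one hB S
      (sum_mul_single_mul_conjTranspose_mul_self (map_star_mem_unitaryGroup_iff.2 hg)), hSS.2,
      hR, trace_diagonal_mul_transpose]
  · simp only [hρ, trace_sum_one_kronecker_mul_vecMulVec_mul_one_kronecker hB S, hSS.1,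
      mul_single_mul_conjTranspose_mul_mul_self, hweight]

/-- Let `Ω = ∑_i √λ_i e_i⊗e_i` be the canonical purification of
`ω(a) = Tr(Ra)`, `R = diag(λ)`, let `g` be unitary, `λ_k(g) = ∑_i λ_i |g_{ik}|²`,
`P_k = 1⊗conj(g e_{kk} g*)`, and `ρ_g = ∑_k P_k Q_Ω P_k` the state produced by the
gauge-induced projective measurement.  Then (i) `ρ_g` restricts on subsystem `A = {a⊗1}` to
`ω`, independently of `g`; (ii) `ρ_g` restricts on subsystem `B = {1⊗b}` to
`∑_k λ_k(g)· ḡ|k⟩⟨k|ḡ*`. -/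
theorem gauge_measured_state_restrictions
    {n : ℕ} (lam : Fin n → ℝ) (hpos : ∀ j, 0 < lam j) (hsum : ∑ j, lam j = 1)
    (R : Matrix (Fin n) (Fin n) ℂ) (hR : R = Matrix.diagonal fun j => (lam j : ℂ))
    (Ω : Fin n × Fin n → ℂ)
    (hΩ : ∀ p : Fin n × Fin n, Ω p = if p.1 = p.2 then (Real.sqrt (lam p.1) : ℂ) else 0)
    (g : Matrix (Fin n) (Fin n) ℂ) (hg : g ∈ Matrix.unitaryGroup (Fin n) ℂ)
    (lamg : Fin n → ℝ) (hlamg : ∀ k, lamg k = ∑ i, lam i * ‖g i k‖ ^ 2)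
    (P : Fin n → Matrix (Fin n × Fin n) (Fin n × Fin n) ℂ)
    (hP : ∀ k, P k = (1 : Matrix (Fin n) (Fin n) ℂ) ⊗ₖ
      ((g * Matrix.single k k (1 : ℂ) * gᴴ).map star))
    (Q : Matrix (Fin n × Fin n) (Fin n × Fin n) ℂ)
    (hQ : ∀ p q : Fin n × Fin n, Q p q = Ω p * star (Ω q))
    (ρg : Matrix (Fin n × Fin n) (Fin n × Fin n) ℂ) (hρg : ρg = ∑ k, P k * Q * P k) :
    (∀ a : Matrix (Fin n) (Fin n) ℂ,
        (ρg * (a ⊗ₖ (1 : Matrix (Fin n) (Fin n) ℂ))).trace = (R * a).trace) ∧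
      (∀ b : Matrix (Fin n) (Fin n) ℂ,
        (ρg * ((1 : Matrix (Fin n) (Fin n) ℂ) ⊗ₖ b)).trace
          = ((∑ k, ((lamg k : ℝ) : ℂ) •
              (g.map star * Matrix.single k k (1 : ℂ) * (g.map star)ᴴ)) * b).trace) :=
  gauge_measured_state_restrictions_general lam hpos R hR Ω hΩ g hg lamg hlamg P hP Q hQ ρg hρg
end

section
/- Let n ≥ 1, λ : Fin n → ℝ with λ_j > 0 and ∑_j λ_j = 1, Ω ∈ ℂ^{Fin n × Fin n} the unit vector Ω_{(i,j)} = δ_{ij} λ_i^{1/2}, g ∈ M_n(ℂ) unitary, λ_k(g) := ∑_i λ_i |g_{ik}|², P_k := 1⊗conj(g e_{kk} g*), and ρ_g := ∑_k P_k Q_Ω P_k with Q_Ω the projection onto span(Ω). Then the multiset of eigenvalues of ρ_g counted with multiplicity is {λ_1(g), …, λ_n(g)} together with n² − n zeros. In particular the von Neumann entropy of ρ_g is ∑_k negMulLog(λ_k(g)). -/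
/-!
With `v_k := P_k Ω`, each summand `P_k Q_Ω P_k` is the rank-one matrix `v_k v_kᴴ`, so
`ρ_g = W Wᴴ` for the matrix `W` with columns `v_k`. The `P_k` are mutually orthogonal
projections, hence `Wᴴ W` is diagonal with entries `⟨Ω, P_k Ω⟩ = λ_k(g)`. Since `W Wᴴ` and
`Wᴴ W` have the same characteristic polynomial up to a factor `X ^ (n² - n)`, the spectrum
of `ρ_g` is `λ_1(g), …, λ_n(g)` padded with zeros, and the zeros do not contribute to the entropy.
-/

open scoped Matrix Kronecker
open Polynomial

namespace Matrix

theorem roots_charpoly_mul_of_mul_eq_diagonal {m n R : Type*} [Fintype m] [Fintype n]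
    [DecidableEq m] [DecidableEq n] [CommRing R] [IsDomain R]
    (A : Matrix m n R) (B : Matrix n m R) (hle : Fintype.card n ≤ Fintype.card m) (d : n → R)
    (hBA : B * A = diagonal d) :
    (A * B).charpoly.roots
      = Finset.univ.val.map d + Multiset.replicate (Fintype.card m - Fintype.card n) 0 := by
  have hprod : ∏ i, (X - C (d i)) ≠ 0 :=
    (monic_prod_of_monic _ _ fun i _ => monic_X_sub_C (d i)).ne_zero
  rw [charpoly_mul_comm_of_le A B hle, hBA, charpoly_diagonal,
    roots_mul (mul_ne_zero (pow_ne_zero _ X_ne_zero) hprod), roots_X_pow, roots_prod _ _ hprod,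
    add_comm, Multiset.nsmul_singleton]
  simp [Multiset.bind_singleton]

variable {ι m n R : Type*} [Fintype m] [CommRing R] [StarRing R]

structure IsOrthogonalProjectionFamily (P : ι → Matrix m m R) : Prop where
  isHermitian : ∀ k, (P k).IsHermitian
  mul_self : ∀ k, P k * P k = P k
  mul_eq_zero : Pairwise fun k l => P k * P l = 0

theorem isOrthogonalProjectionFamily_single [DecidableEq m] :
    IsOrthogonalProjectionFamily fun k : m => single k k (1 : R) where
  isHermitian k := by simp [IsHermitian]
  mul_self k := by simp
  mul_eq_zero k l hkl := by simp [hkl]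

namespace IsOrthogonalProjectionFamily

variable {P : ι → Matrix m m R}

theorem mul_eq_ite [DecidableEq ι] (hP : IsOrthogonalProjectionFamily P) (k l : ι) :
    P k * P l = if k = l then P k else 0 := by
  split_ifs with h
  · rw [h, hP.mul_self]
  · exact hP.mul_eq_zero h

theorem conj_isometry [Fintype n] [DecidableEq m] (hP : IsOrthogonalProjectionFamily P)
    {U : Matrix n m R} (hU : Uᴴ * U = 1) : IsOrthogonalProjectionFamily fun k => U * P k * Uᴴ := by
  have hmul : ∀ A B : Matrix m m R, U * A * Uᴴ * (U * B * Uᴴ) = U * (A * B) * Uᴴ := fun A B => by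
    rw [show U * A * Uᴴ * (U * B * Uᴴ) = U * A * (Uᴴ * U) * B * Uᴴ by
        simp only [Matrix.mul_assoc], hU, Matrix.mul_one, Matrix.mul_assoc U]
  exact ⟨fun k => isHermitian_mul_mul_conjTranspose U (hP.isHermitian k),
    fun k => by rw [hmul, hP.mul_self], fun k l hkl => by simp [hmul, hP.mul_eq_zero hkl]⟩

theorem map_star (hP : IsOrthogonalProjectionFamily P) :
    IsOrthogonalProjectionFamily fun k => (P k).map star := by
  have hmul : ∀ A B : Matrix m m R, A.map star * B.map star = (A * B).map star := fun A B =>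
    (Matrix.map_mul (f := starRingEnd R)).symm
  exact ⟨fun k => by ext i j; simpa using congrArg star ((hP.isHermitian k).apply i j),
    fun k => by rw [hmul, hP.mul_self], fun k l hkl => by simp [hmul, hP.mul_eq_zero hkl]⟩

theorem one_kronecker [Fintype n] [DecidableEq n] (hP : IsOrthogonalProjectionFamily P) :
    IsOrthogonalProjectionFamily fun k => (1 : Matrix n n R) ⊗ₖ P k := by
  have hmul : ∀ A B : Matrix m m R, (1 : Matrix n n R) ⊗ₖ A * (1 ⊗ₖ B) = 1 ⊗ₖ (A * B) :=
    fun A B => by rw [← mul_kronecker_mul, one_mul]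
  exact ⟨fun k => by simp [IsHermitian, conjTranspose_kronecker, (hP.isHermitian k).eq],
    fun k => by rw [hmul, hP.mul_self], fun k l hkl => by simp [hmul, hP.mul_eq_zero hkl]⟩

end IsOrthogonalProjectionFamily

theorem sum_mul_vecMulVec_star_mul [Fintype ι] {P : ι → Matrix m m R}
    (hP : ∀ k, (P k).IsHermitian) (Ω : m → R) :
    ∑ k, P k * vecMulVec Ω (star Ω) * P k
      = (of fun p k => (P k *ᵥ Ω) p) * (of fun p k => (P k *ᵥ Ω) p)ᴴ := by
  have hk : ∀ k, P k * vecMulVec Ω (star Ω) * P k = vecMulVec (P k *ᵥ Ω) (star (P k *ᵥ Ω)) :=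
    fun k => by rw [mul_vecMulVec, vecMulVec_mul, star_mulVec, (hP k).eq]
  ext p q
  simp [hk, mul_apply, vecMulVec_apply, sum_apply]

theorem IsOrthogonalProjectionFamily.conjTranspose_mul_self_eq_diagonal [DecidableEq ι]
    {P : ι → Matrix m m R} (hP : IsOrthogonalProjectionFamily P) (Ω : m → R) :
    (of fun p k => (P k *ᵥ Ω) p)ᴴ * (of fun p k => (P k *ᵥ Ω) p)
      = diagonal fun k => star Ω ⬝ᵥ (P k *ᵥ Ω) := by
  ext k l
  have hentry : ((of fun p k => (P k *ᵥ Ω) p)ᴴ * (of fun p k => (P k *ᵥ Ω) p)) k l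
      = star Ω ⬝ᵥ ((P k * P l) *ᵥ Ω) := by
    rw [← mulVec_mulVec, dotProduct_mulVec, ← (hP.isHermitian k).eq, ← star_mulVec]
    rfl
  rw [hentry, hP.mul_eq_ite, diagonal_apply]
  split_ifs <;> simp

theorem star_dotProduct_one_kronecker_mulVec [Fintype n] [DecidableEq n] (A : Matrix n n R)
    (s : n → R) (Ω : n × n → R)
    (hΩ : ∀ p, Ω p = if p.1 = p.2 then s p.1 else 0) :
    star Ω ⬝ᵥ ((1 ⊗ₖ A) *ᵥ Ω) = ∑ i, star (s i) * A i i * s i := by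
  simp [dotProduct, mulVec, hΩ, Fintype.sum_prod_type, one_apply, mul_assoc, apply_ite star,
    ite_mul]

theorem mul_single_one_mul_conjTranspose_apply [DecidableEq m] (U : Matrix n m R) (k : m)
    (i j : n) :
    (U * single k k (1 : R) * Uᴴ) i j = U i k * star (U j k) := by
  simp [mul_apply, single_apply, ite_and]

end Matrix

open Matrix

theorem spectrum_and_entropy_of_gauge_measured_state_general
    {n : ℕ} (lam : Fin n → ℝ) (hpos : ∀ j, 0 < lam j)
    (Ω : Fin n × Fin n → ℂ)
    (hΩ : ∀ p : Fin n × Fin n, Ω p = if p.1 = p.2 then (Real.sqrt (lam p.1) : ℂ) else 0)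
    (g : Matrix (Fin n) (Fin n) ℂ) (hg : g ∈ Matrix.unitaryGroup (Fin n) ℂ)
    (lamg : Fin n → ℝ) (hlamg : ∀ k, lamg k = ∑ i, lam i * ‖g i k‖ ^ 2)
    (P : Fin n → Matrix (Fin n × Fin n) (Fin n × Fin n) ℂ)
    (hP : ∀ k, P k = (1 : Matrix (Fin n) (Fin n) ℂ) ⊗ₖ
      ((g * Matrix.single k k (1 : ℂ) * gᴴ).map star))
    (Q : Matrix (Fin n × Fin n) (Fin n × Fin n) ℂ)
    (hQ : ∀ p q : Fin n × Fin n, Q p q = Ω p * star (Ω q))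
    (ρg : Matrix (Fin n × Fin n) (Fin n × Fin n) ℂ) (hρg : ρg = ∑ k, P k * Q * P k) :
    ρg.charpoly.roots
        = (Finset.univ.val.map fun k => ((lamg k : ℝ) : ℂ))
          + Multiset.replicate (n ^ 2 - n) 0 ∧
      (ρg.charpoly.roots.map fun z => Real.negMulLog z.re).sum
        = ∑ k, Real.negMulLog (lamg k) := by
  have hPfam : IsOrthogonalProjectionFamily P := by
    rw [funext hP]
    exact (isOrthogonalProjectionFamily_single.conj_isometry
      (mem_unitaryGroup_iff'.mp hg)).map_star.one_kronecker
  have hQ : Q = vecMulVec Ω (star Ω) := by ext p q; simp [hQ, vecMulVec_apply]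
  have hweights : (fun k => star Ω ⬝ᵥ (P k *ᵥ Ω)) = fun k => ((lamg k : ℝ) : ℂ) := by
    funext k
    rw [hP, star_dotProduct_one_kronecker_mulVec _ (fun i => (Real.sqrt (lam i) : ℂ)) Ω hΩ, hlamg]
    push_cast
    refine Finset.sum_congr rfl fun i _ => ?_
    simp only [RCLike.star_def, Complex.conj_ofReal, map_apply,
      mul_single_one_mul_conjTranspose_apply, Complex.mul_conj', map_pow]
    rw [mul_comm, ← mul_assoc, ← Complex.ofReal_mul, Real.mul_self_sqrt (hpos i).le]
  have hroots : ρg.charpoly.roots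
      = (Finset.univ.val.map fun k => ((lamg k : ℝ) : ℂ)) + Multiset.replicate (n ^ 2 - n) 0 := by
    rw [hρg, hQ, sum_mul_vecMulVec_star_mul hPfam.isHermitian,
      roots_charpoly_mul_of_mul_eq_diagonal _ _ (by simp [Nat.le_mul_self]) _
        (hPfam.conjTranspose_mul_self_eq_diagonal Ω), hweights]
    simp [sq]
  refine ⟨hroots, ?_⟩
  rw [hroots, Multiset.map_add, Multiset.sum_add, Multiset.map_map, Multiset.map_replicate]
  simp [Finset.sum_eq_multiset_sum]

/-- The state `ρ_g = ∑_k P_k Q_Ω P_k` obtained from the purification `Ω`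
by the gauge-induced projective measurement `P_k = 1⊗conj(g e_{kk} g*)` has eigenvalues
(with multiplicity, as roots of the characteristic polynomial) `λ_1(g), …, λ_n(g)` together
with `n² − n` zeros, where `λ_k(g) = ∑_i λ_i |g_{ik}|²`; hence its von Neumann entropy is
`∑_k negMulLog λ_k(g)`. -/
theorem spectrum_and_entropy_of_gauge_measured_state
    {n : ℕ} (hn : 1 ≤ n) (lam : Fin n → ℝ) (hpos : ∀ j, 0 < lam j) (hsum : ∑ j, lam j = 1)
    (Ω : Fin n × Fin n → ℂ)
    (hΩ : ∀ p : Fin n × Fin n, Ω p = if p.1 = p.2 then (Real.sqrt (lam p.1) : ℂ) else 0)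
    (g : Matrix (Fin n) (Fin n) ℂ) (hg : g ∈ Matrix.unitaryGroup (Fin n) ℂ)
    (lamg : Fin n → ℝ) (hlamg : ∀ k, lamg k = ∑ i, lam i * ‖g i k‖ ^ 2)
    (P : Fin n → Matrix (Fin n × Fin n) (Fin n × Fin n) ℂ)
    (hP : ∀ k, P k = (1 : Matrix (Fin n) (Fin n) ℂ) ⊗ₖ
      ((g * Matrix.single k k (1 : ℂ) * gᴴ).map star))
    (Q : Matrix (Fin n × Fin n) (Fin n × Fin n) ℂ)
    (hQ : ∀ p q : Fin n × Fin n, Q p q = Ω p * star (Ω q))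
    (ρg : Matrix (Fin n × Fin n) (Fin n × Fin n) ℂ) (hρg : ρg = ∑ k, P k * Q * P k) :
    ρg.charpoly.roots
        = (Finset.univ.val.map fun k => ((lamg k : ℝ) : ℂ))
          + Multiset.replicate (n ^ 2 - n) 0 ∧
      (ρg.charpoly.roots.map fun z => Real.negMulLog z.re).sum
        = ∑ k, Real.negMulLog (lamg k) :=
  spectrum_and_entropy_of_gauge_measured_state_general lam hpos Ω hΩ g hg lamg hlamg P hP Q hQ ρg
    hρg
end
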